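/- arXiv:2411.08150 — 2 statements merged into one kernel-verified Lean document; each statement's English description precedes it below -/
import Mathlib

section
/- Let p be a probability mass function on Fin K with p(k) > 0 for all k, let ψ : Fin K → ℝ satisfy ∑_k p(k)·ψ(k) = 0, and define C(ε) := (∑_k e^{ε·ψ(k)}·p(k))^{-1}. For observed data points x₁, …, x_n ∈ Fin K, define the log-likelihood along the tilted path ℓ(ε) := ∑_{i=1}^n (log C(ε) + ε·ψ(x_i) + log p(x_i)). Then ℓ is differentiable at 0 with ℓ'(0) = ∑_{i=1}^n ψ(x_i); in particular, ε = 0 is a critical point of ℓ if and only if the empirical plug-in bias term (1/n)∑_{i=1}^n ψ(x_i) equals zero. -/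
/-- the log-likelihood along the exponential tilt path has derivative
`∑ ψ(x_i)` at `ε = 0`; in particular `ε = 0` is a critical point iff the empirical
plug-in bias `(1/n)∑ ψ(x_i)` vanishes. -/
theorem tilt_loglikelihood_derivative
    {K n : ℕ} (p ψ : Fin K → ℝ)
    (hp : ∀ k, 0 < p k) (hsum : ∑ k, p k = 1)
    (hmean : ∑ k, p k * ψ k = 0)
    (x : Fin n → Fin K)
    (ℓ : ℝ → ℝ)
    (hℓ : ℓ = fun ε : ℝ => ∑ i,
      (Real.log ((∑ k, Real.exp (ε * ψ k) * p k)⁻¹) + ε * ψ (x i) + Real.log (p (x i)))) :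
    HasDerivAt ℓ (∑ i, ψ (x i)) 0 ∧
    (deriv ℓ 0 = 0 ↔ (1 / (n : ℝ)) * ∑ i, ψ (x i) = 0) := by
  set Z : ℝ → ℝ := fun ε => ∑ k, Real.exp (ε * ψ k) * p k with hZdef
  have hZ0 : Z 0 = 1 := by
    simp only [hZdef, zero_mul, Real.exp_zero, one_mul]
    exact hsum
  have hZ : HasDerivAt Z (∑ k, ψ k * Real.exp ((0:ℝ) * ψ k) * p k) 0 := by
    apply HasDerivAt.fun_sum
    intro k _
    have h1 : HasDerivAt (fun ε : ℝ => ε * ψ k) (ψ k) 0 := by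
      simpa using (hasDerivAt_id (0:ℝ)).mul_const (ψ k)
    simpa [mul_comm] using (h1.exp.mul_const (p k))
  have hZ' : (∑ k, ψ k * Real.exp ((0:ℝ) * ψ k) * p k) = 0 := by
    simp only [zero_mul, Real.exp_zero, mul_one]
    rw [← hmean]
    exact Finset.sum_congr rfl (fun k _ => mul_comm _ _)
  rw [hZ'] at hZ
  have hterm : ∀ i : Fin n, HasDerivAt
      (fun ε : ℝ => Real.log ((Z ε)⁻¹) + ε * ψ (x i) + Real.log (p (x i))) (ψ (x i)) 0 := by
    intro i
    have hlog : HasDerivAt (fun ε => Real.log (Z ε)) 0 0 := by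
      have := (Real.hasDerivAt_log (by rw [hZ0]; norm_num)).comp 0 hZ
      simpa [Function.comp_def] using this
    have hloginv : HasDerivAt (fun ε => Real.log ((Z ε)⁻¹)) 0 0 := by
      have := hlog.neg
      simp only [Real.log_inv]
      simpa [Pi.neg_def] using this
    have hlin : HasDerivAt (fun ε : ℝ => ε * ψ (x i)) (ψ (x i)) 0 := by
      simpa using (hasDerivAt_id (0:ℝ)).mul_const (ψ (x i))
    simpa using (hloginv.add hlin).add_const (Real.log (p (x i)))
  have hmain : HasDerivAt ℓ (∑ i, ψ (x i)) 0 := by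
    rw [hℓ]
    exact HasDerivAt.fun_sum (fun i _ => hterm i)
  refine ⟨hmain, ?_⟩
  rw [hmain.deriv]
  constructor
  · intro h; rw [h, mul_zero]
  · intro h
    rcases Nat.eq_zero_or_pos n with hn | hn
    · subst hn; simp
    · have hne : (n : ℝ) ≠ 0 := Nat.cast_ne_zero.mpr hn.ne'
      field_simp at h
      simpa using h
end

section
/- Let a, b : Matrix (Fin N) (Fin N) ℝ and c, d : Fin N → ℝ with c_i > 0 for all i, and define the contaminated kernel path K(ε)_{ji} := ((1−ε)·a_{ji} + ε·b_{ji}) / ((1−ε)·c_i + ε·d_i). Suppose λ : ℝ → ℝ and u, v : ℝ → (Fin N → ℝ) are differentiable at 0, satisfy K(ε) *ᵥ u(ε) = λ(ε) • u(ε) and (K(ε))ᵀ *ᵥ v(ε) = λ(ε) • v(ε) for all ε in a neighborhood of 0, and v(0)ᵀu(0) ≠ 0. Then λ'(0) = (∑_{j,i} v_j(0)·u_i(0)·(b_{ji}·c_i − a_{ji}·d_i)/c_i²) / (v(0)ᵀu(0)). -/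
open Matrix Filter

/-- derivative of the dominant eigenvalue of the point-mass
contaminated IPM kernel `K(ε)_{ji} = ((1−ε)a_{ji} + εb_{ji})/((1−ε)c_i + εd_i)`:
`λ'(0) = (∑_{j,i} v_j u_i (b_{ji}c_i − a_{ji}d_i)/c_i²) / (vᵀu)`. -/
theorem contaminated_kernel_eigenvalue_derivative
    {N : ℕ}
    (a b : Matrix (Fin N) (Fin N) ℝ) (c d : Fin N → ℝ)
    (hc : ∀ i, 0 < c i)
    (K : ℝ → Matrix (Fin N) (Fin N) ℝ)
    (hK : ∀ ε : ℝ, ∀ j i, K ε j i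
      = ((1 - ε) * a j i + ε * b j i) / ((1 - ε) * c i + ε * d i))
    (lam : ℝ → ℝ) (lam' : ℝ)
    (u v : ℝ → (Fin N → ℝ)) (u' v' : Fin N → ℝ)
    (hlam : HasDerivAt lam lam' 0)
    (hu : ∀ i, HasDerivAt (fun ε => u ε i) (u' i) 0)
    (hv : ∀ i, HasDerivAt (fun ε => v ε i) (v' i) 0)
    (hright : ∀ᶠ ε in nhds (0 : ℝ), K ε *ᵥ u ε = lam ε • u ε)
    (hleft : ∀ᶠ ε in nhds (0 : ℝ), (K ε)ᵀ *ᵥ v ε = lam ε • v ε)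
    (hvu : v 0 ⬝ᵥ u 0 ≠ 0) :
    lam' = (∑ j, ∑ i, v 0 j * u 0 i * ((b j i * c i - a j i * d i) / (c i ^ 2)))
        / (v 0 ⬝ᵥ u 0) := by
  classical
  set W : Matrix (Fin N) (Fin N) ℝ :=
    fun j i => (b j i * c i - a j i * d i) / (c i ^ 2) with hWdef
  -- entrywise derivative of K at 0
  have hKd : ∀ j i, HasDerivAt (fun ε => K ε j i) (W j i) 0 := by
    intro j i
    have hfun : (fun ε => K ε j i)
        = fun ε => ((1 - ε) * a j i + ε * b j i) / ((1 - ε) * c i + ε * d i) :=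
      funext fun ε => hK ε j i
    have h1 : HasDerivAt (fun ε : ℝ => (1 - ε) * a j i + ε * b j i)
        (b j i - a j i) 0 := by
      have he : (fun ε : ℝ => (1 - ε) * a j i + ε * b j i)
          = fun ε => a j i + ε * (b j i - a j i) := by funext ε; ring
      rw [he]
      simpa using (((hasDerivAt_id (0:ℝ)).mul_const (b j i - a j i)).const_add (a j i))
    have h2 : HasDerivAt (fun ε : ℝ => (1 - ε) * c i + ε * d i)
        (d i - c i) 0 := by
      have he : (fun ε : ℝ => (1 - ε) * c i + ε * d i)
          = fun ε => c i + ε * (d i - c i) := by funext ε; ring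
      rw [he]
      simpa using (((hasDerivAt_id (0:ℝ)).mul_const (d i - c i)).const_add (c i))
    have hden : (1 - (0:ℝ)) * c i + 0 * d i ≠ 0 := by simpa using (hc i).ne'
    have h3 := h1.fun_div h2 hden
    rw [hfun]
    refine h3.congr_deriv ?_
    have hci := (hc i).ne'
    rw [hWdef]
    field_simp
    ring
  -- the bilinear form g(ε) = Σⱼᵢ vⱼ (Kⱼᵢ uᵢ)
  have hg : HasDerivAt (fun ε => ∑ j, ∑ i, v ε j * (K ε j i * u ε i))
      (∑ j, ∑ i, (v' j * (K 0 j i * u 0 i)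
        + v 0 j * (W j i * u 0 i + K 0 j i * u' i))) 0 := by
    apply HasDerivAt.fun_sum
    intro j _
    apply HasDerivAt.fun_sum
    intro i _
    exact (hv j).mul ((hKd j i).mul (hu i))
  -- the right-hand side h(ε) = λ(ε) Σᵢ vᵢ uᵢ
  have hh : HasDerivAt (fun ε => lam ε * ∑ i, v ε i * u ε i)
      (lam' * (∑ i, v 0 i * u 0 i)
        + lam 0 * ∑ i, (v' i * u 0 i + v 0 i * u' i)) 0 :=
    hlam.mul (HasDerivAt.fun_sum fun i _ => (hv i).mul (hu i))
  -- g = h eventually near 0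
  have heq : (fun ε => ∑ j, ∑ i, v ε j * (K ε j i * u ε i))
      =ᶠ[nhds (0:ℝ)] (fun ε => lam ε * ∑ i, v ε i * u ε i) := by
    filter_upwards [hright] with ε hε
    have : ∀ j, ∑ i, K ε j i * u ε i = lam ε * u ε j := by
      intro j
      have := congrFun hε j
      simpa [Matrix.mulVec, dotProduct] using this
    calc ∑ j, ∑ i, v ε j * (K ε j i * u ε i)
        = ∑ j, v ε j * ∑ i, K ε j i * u ε i := by
          simp [Finset.mul_sum]
      _ = ∑ j, v ε j * (lam ε * u ε j) := by
          simp only [this]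
      _ = lam ε * ∑ i, v ε i * u ε i := by
          rw [Finset.mul_sum]; apply Finset.sum_congr rfl; intros; ring
  have hg' := hh.congr_of_eventuallyEq heq
  have hEq := hg.unique hg'
  -- eigen-identities at 0
  have hr0 : ∀ j, ∑ i, K 0 j i * u 0 i = lam 0 * u 0 j := by
    intro j
    have := congrFun hright.self_of_nhds j
    simpa [Matrix.mulVec, dotProduct] using this
  have hl0 : ∀ i, ∑ j, K 0 j i * v 0 j = lam 0 * v 0 i := by
    intro i
    have := congrFun hleft.self_of_nhds i
    simpa [Matrix.mulVec, dotProduct, Matrix.transpose_apply] using this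
  -- decompose the LHS of hEq
  have hA : ∑ j, ∑ i, v' j * (K 0 j i * u 0 i)
      = lam 0 * ∑ i, v' i * u 0 i := by
    rw [Finset.mul_sum]
    apply Finset.sum_congr rfl
    intro j _
    rw [← Finset.mul_sum, hr0 j]; ring
  have hB : ∑ j, ∑ i, v 0 j * (K 0 j i * u' i)
      = lam 0 * ∑ i, v 0 i * u' i := by
    rw [Finset.sum_comm, Finset.mul_sum]
    apply Finset.sum_congr rfl
    intro i _
    have : ∑ j, v 0 j * (K 0 j i * u' i) = (∑ j, K 0 j i * v 0 j) * u' i := by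
      rw [Finset.sum_mul]; apply Finset.sum_congr rfl; intros; ring
    rw [this, hl0 i]; ring
  have hT : ∑ j, ∑ i, v 0 j * (W j i * u 0 i)
      = ∑ j, ∑ i, v 0 j * u 0 i * ((b j i * c i - a j i * d i) / (c i ^ 2)) := by
    apply Finset.sum_congr rfl; intro j _
    apply Finset.sum_congr rfl; intro i _
    simp only [hWdef]; ring
  -- assemble
  have hsplit : ∑ j, ∑ i, (v' j * (K 0 j i * u 0 i)
        + v 0 j * (W j i * u 0 i + K 0 j i * u' i))
      = (∑ j, ∑ i, v' j * (K 0 j i * u 0 i))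
        + (∑ j, ∑ i, v 0 j * (W j i * u 0 i))
        + (∑ j, ∑ i, v 0 j * (K 0 j i * u' i)) := by
    simp [Finset.sum_add_distrib, mul_add, add_assoc]
  rw [hsplit, hA, hB, hT] at hEq
  have hS : v 0 ⬝ᵥ u 0 = ∑ i, v 0 i * u 0 i := rfl
  have hsum : ∑ i, (v' i * u 0 i + v 0 i * u' i)
      = (∑ i, v' i * u 0 i) + ∑ i, v 0 i * u' i := Finset.sum_add_distrib
  rw [hsum, mul_add] at hEq
  rw [hS] at hvu ⊢
  rw [eq_div_iff hvu]
  linarith [hEq]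
end
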